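/- arXiv:1507.01548 — 2 statements merged into one kernel-verified Lean document; each statement's English description precedes it below -/
import Mathlib

section
/- Under the truncation model, for every x > 0 with 𝐅(x) > 0, Woodroofe's identity holds: ∫_{(x,∞)} (1/𝐅(z)) dμ_𝐅(z) = ∫_{(x,∞)} (1/C(z)) dμ_F(z), where C(z) := F(z) − G(z) and μ_F is the Lebesgue–Stieltjes measure of F; consequently 𝐅(x) = exp( −∫_{(x,∞)} (1/C(z)) dμ_F(z) ). -/
open MeasureTheory Filter Set Real

/-!
Integrating by parts (Tonelli on the triangle `0 < u < v ≤ z`, using that `μ_𝐅` has no atoms)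
gives `F - G = p⁻¹ 𝐅 𝐆̄`, while `dμ_F = p⁻¹ 𝐆̄ dμ_𝐅`; hence the right-hand integrand is just
`1 / 𝐅` against `μ_𝐅`. As `𝐅` is continuous, it pushes `μ_𝐅` restricted to `(x, ∞)` forward to
Lebesgue measure on `(𝐅 x, 1]`, so that integral is `∫_{𝐅 x}^1 du / u = -log 𝐅 x`.
-/

open Topology
open scoped ENNReal

lemma Iic_sdiff_Iic (a b : ℝ) : Iic b \ Iic a = Ioc a b := by
  ext t; simp [and_comm]

lemma nonneg_of_monotone_of_eq_zero {H : ℝ → ℝ} (hmono : Monotone H)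
    (h0 : ∀ x ≤ (0 : ℝ), H x = 0) (x : ℝ) : 0 ≤ H x :=
  (h0 _ (min_le_right x 0)).symm.le.trans (hmono (min_le_left x 0))

lemma exists_preimage_Iic_eq_Iic {H : ℝ → ℝ} (hmono : Monotone H) (hcont : Continuous H)
    {l : ℝ} (htop : Tendsto H atTop (𝓝 l)) {x c : ℝ} (hxc : H x ≤ c) (hcl : c < l) :
    ∃ a, H a = c ∧ H ⁻¹' Iic c = Iic a := by
  obtain ⟨N, hN⟩ := (htop.eventually (eventually_gt_nhds hcl)).exists
  have hxN : x ≤ N := hmono.reflect_lt (hxc.trans_lt hN) |>.le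
  obtain ⟨a', -, ha'⟩ := intermediate_value_Icc hxN hcont.continuousOn ⟨hxc, hN.le⟩
  have hbdd : BddAbove (H ⁻¹' Iic c) :=
    ⟨N, fun z hz => le_of_lt (hmono.reflect_lt (lt_of_le_of_lt hz hN))⟩
  have hmem : sSup (H ⁻¹' Iic c) ∈ H ⁻¹' Iic c :=
    (isClosed_Iic.preimage hcont).csSup_mem ⟨x, hxc⟩ hbdd
  refine ⟨sSup (H ⁻¹' Iic c), le_antisymm hmem ?_,
    Subset.antisymm (fun z hz => le_csSup hbdd hz) fun z hz => (hmono hz).trans hmem⟩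
  calc c = H a' := ha'.symm
    _ ≤ H (sSup (H ⁻¹' Iic c)) := hmono (le_csSup hbdd ha'.le)

section Cdf

variable {μ : Measure ℝ} {H : ℝ → ℝ}

lemma isProbabilityMeasure_of_cdf (hμ : ∀ b, μ (Iic b) = ENNReal.ofReal (H b))
    (htop : Tendsto H atTop (𝓝 1)) : IsProbabilityMeasure μ := by
  refine ⟨tendsto_nhds_unique (tendsto_measure_Iic_atTop μ) ?_⟩
  simpa [hμ] using ENNReal.tendsto_ofReal htop

lemma isLocallyFiniteMeasure_of_cdf (hμ : ∀ b, μ (Iic b) = ENNReal.ofReal (H b)) :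
    IsLocallyFiniteMeasure μ :=
  ⟨fun x => ⟨Iio (x + 1), Iio_mem_nhds (lt_add_one x),
    (measure_mono Iio_subset_Iic_self).trans_lt (by simp [hμ])⟩⟩

lemma measure_Ioc_of_cdf (hμ : ∀ b, μ (Iic b) = ENNReal.ofReal (H b)) {a b : ℝ} (hab : a ≤ b)
    (ha : 0 ≤ H a) : μ (Ioc a b) = ENNReal.ofReal (H b - H a) := by
  rw [← Iic_sdiff_Iic, measure_sdiff (Iic_subset_Iic.2 hab) nullMeasurableSet_Iic
    (by simp [hμ]), hμ, hμ, ENNReal.ofReal_sub _ ha]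

lemma measure_Ioi_of_cdf (hμ : ∀ b, μ (Iic b) = ENNReal.ofReal (H b))
    (htop : Tendsto H atTop (𝓝 1)) {a : ℝ} (ha : 0 ≤ H a) :
    μ (Ioi a) = ENNReal.ofReal (1 - H a) := by
  have := isProbabilityMeasure_of_cdf hμ htop
  rw [← compl_Iic, prob_compl_eq_one_sub measurableSet_Iic, hμ, ENNReal.ofReal_sub _ ha,
    ENNReal.ofReal_one]

lemma nullSingletonClass_of_cdf (hμ : ∀ b, μ (Iic b) = ENNReal.ofReal (H b))
    (hcont : Continuous H) (hnn : ∀ x, 0 ≤ H x) : NullSingletonClass μ := by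
  refine ⟨fun a => le_antisymm ?_ zero_le⟩
  have hlim : Tendsto (fun ε => ENNReal.ofReal (H a - H (a - ε))) (𝓝[>] 0) (𝓝 0) := by
    have : Continuous fun ε => H a - H (a - ε) := by fun_prop
    simpa using (ENNReal.tendsto_ofReal (this.tendsto 0)).mono_left nhdsWithin_le_nhds
  refine ge_of_tendsto hlim (eventually_nhdsWithin_of_forall fun ε (hε : 0 < ε) => ?_)
  calc μ {a} ≤ μ (Ioc (a - ε) a) := measure_mono (by simpa using hε)
    _ = ENNReal.ofReal (H a - H (a - ε)) := measure_Ioc_of_cdf hμ (by linarith) (hnn _)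

lemma map_restrict_Ioi_of_cdf (hμ : ∀ b, μ (Iic b) = ENNReal.ofReal (H b)) (hmono : Monotone H)
    (hcont : Continuous H) (htop : Tendsto H atTop (𝓝 1)) (hnn : ∀ x, 0 ≤ H x) (x : ℝ) :
    (μ.restrict (Ioi x)).map H = volume.restrict (Ioc (H x) 1) := by
  have := isProbabilityMeasure_of_cdf hμ htop
  refine Measure.ext_of_Iic _ _ fun c => ?_
  rw [Measure.map_apply hcont.measurable measurableSet_Iic,
    Measure.restrict_apply (hcont.measurable measurableSet_Iic),
    Measure.restrict_apply measurableSet_Iic, inter_comm (Iic c), Ioc_inter_Iic, Real.volume_Ioc]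
  rcases lt_or_ge c (H x) with hcx | hxc
  · have : H ⁻¹' Iic c ∩ Ioi x = ∅ :=
      eq_empty_of_forall_notMem fun z hz => (hcx.trans_le (hmono hz.2.le)).not_ge hz.1
    rw [this, measure_empty,
      ENNReal.ofReal_of_nonpos (sub_nonpos.2 (inf_le_right.trans hcx.le))]
  rcases lt_or_ge c 1 with hc1 | hc1
  · obtain ⟨a, hac, ha⟩ := exists_preimage_Iic_eq_Iic hmono hcont htop hxc hc1
    have hxa : x ≤ a := by rw [← mem_Iic, ← ha]; exact hxc
    rw [ha, inter_comm, Ioi_inter_Iic, measure_Ioc_of_cdf hμ hxa (hnn x), hac,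
      min_eq_right hc1.le]
  · have : H ⁻¹' Iic c = univ :=
      eq_univ_of_forall fun z => (hmono.ge_of_tendsto htop z).trans hc1
    rw [this, univ_inter, measure_Ioi_of_cdf hμ htop (hnn x), min_eq_left hc1]

lemma setIntegral_Ioi_inv_of_cdf (hμ : ∀ b, μ (Iic b) = ENNReal.ofReal (H b))
    (hmono : Monotone H) (hcont : Continuous H) (htop : Tendsto H atTop (𝓝 1))
    (hnn : ∀ x, 0 ≤ H x) {x : ℝ} (hx : 0 < H x) :
    ∫ z in Ioi x, (H z)⁻¹ ∂μ = -log (H x) := by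
  calc ∫ z in Ioi x, (H z)⁻¹ ∂μ = ∫ u, u⁻¹ ∂(μ.restrict (Ioi x)).map H :=
        (integral_map hcont.aemeasurable measurable_inv.aestronglyMeasurable).symm
    _ = ∫ u in (H x)..1, u⁻¹ := by
        rw [map_restrict_Ioi_of_cdf hμ hmono hcont htop hnn,
          intervalIntegral.integral_of_le (hmono.ge_of_tendsto htop x)]
    _ = -log (H x) := by
        rw [integral_inv_of_pos hx one_pos, log_div one_ne_zero hx.ne', log_one, zero_sub]

end Cdf

lemma lintegral_measure_Ioc_eq_lintegral_measure_Ioo (μ ν : Measure ℝ) [SFinite μ] [SFinite ν]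
    (a z : ℝ) : ∫⁻ u in Ioc a z, ν (Ioc u z) ∂μ = ∫⁻ v in Ioc a z, μ (Ioo a v) ∂ν := by
  let S := {q : ℝ × ℝ | a < q.1 ∧ q.1 < q.2 ∧ q.2 ≤ z}
  have hS : MeasurableSet S :=
    (measurableSet_lt measurable_const measurable_fst).inter
      ((measurableSet_lt measurable_fst measurable_snd).inter
        (measurableSet_le measurable_snd measurable_const))
  calc ∫⁻ u in Ioc a z, ν (Ioc u z) ∂μ = ∫⁻ u, ν (Prod.mk u ⁻¹' S) ∂μ := by
        rw [← lintegral_indicator measurableSet_Ioc]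
        congr 1 with u
        by_cases hu : u ∈ Ioc a z
        · rw [indicator_of_mem hu]
          congr 1 with v
          simp [S, hu.1]
        · rw [indicator_of_notMem hu, eq_empty_of_forall_notMem (s := Prod.mk u ⁻¹' S)
            fun v hv => hu ⟨hv.1, hv.2.1.le.trans hv.2.2⟩, measure_empty]
    _ = μ.prod ν S := (Measure.prod_apply hS).symm
    _ = ∫⁻ v, μ ((·, v) ⁻¹' S) ∂ν := Measure.prod_apply_symm hS
    _ = ∫⁻ v in Ioc a z, μ (Ioo a v) ∂ν := by
        rw [← lintegral_indicator measurableSet_Ioc]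
        congr 1 with v
        by_cases hv : v ∈ Ioc a z
        · rw [indicator_of_mem hv]
          congr 1 with u
          simp [S, hv.2]
        · rw [indicator_of_notMem hv, eq_empty_of_forall_notMem (s := (·, v) ⁻¹' S)
            fun u hu => hv ⟨hu.1.trans hu.2.1, hu.2.2⟩, measure_empty]

section TwoCdfs

variable {μ ν : Measure ℝ} {H K : ℝ → ℝ}

lemma setIntegral_Ioc_sub_cdf_eq_setIntegral_Ioc_cdf_sub
    (hμ : ∀ b, μ (Iic b) = ENNReal.ofReal (H b)) (hν : ∀ b, ν (Iic b) = ENNReal.ofReal (K b))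
    [NullSingletonClass μ] (hH : Monotone H) (hK : Monotone K) {a z : ℝ} (hHa : 0 ≤ H a)
    (hKa : 0 ≤ K a) :
    ∫ u in Ioc a z, (K z - K u) ∂μ = ∫ v in Ioc a z, (H v - H a) ∂ν := by
  have := isLocallyFiniteMeasure_of_cdf hμ
  have := isLocallyFiniteMeasure_of_cdf hν
  rw [integral_eq_lintegral_of_nonneg_ae, integral_eq_lintegral_of_nonneg_ae]
  · congr 1
    calc ∫⁻ u in Ioc a z, ENNReal.ofReal (K z - K u) ∂μ = ∫⁻ u in Ioc a z, ν (Ioc u z) ∂μ :=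
          setLIntegral_congr_fun measurableSet_Ioc fun u hu =>
            (measure_Ioc_of_cdf hν hu.2 (hKa.trans (hK hu.1.le))).symm
      _ = ∫⁻ v in Ioc a z, μ (Ioo a v) ∂ν :=
          lintegral_measure_Ioc_eq_lintegral_measure_Ioo μ ν a z
      _ = ∫⁻ v in Ioc a z, ENNReal.ofReal (H v - H a) ∂ν :=
          setLIntegral_congr_fun measurableSet_Ioc fun v hv => by
            rw [measure_congr Ioo_ae_eq_Ioc, measure_Ioc_of_cdf hμ hv.1.le hHa]
  · exact ae_restrict_of_forall_mem measurableSet_Ioc fun v hv => sub_nonneg.2 (hH hv.1.le)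
  · exact (hH.measurable.sub measurable_const).aestronglyMeasurable
  · exact ae_restrict_of_forall_mem measurableSet_Ioc fun u hu => sub_nonneg.2 (hK hu.2)
  · exact (measurable_const.sub hK.measurable).aestronglyMeasurable

lemma setIntegral_Ioc_one_sub_cdf_sub_setIntegral_Ioc_cdf
    (hμ : ∀ b, μ (Iic b) = ENNReal.ofReal (H b)) (hν : ∀ b, ν (Iic b) = ENNReal.ofReal (K b))
    [NullSingletonClass μ] (hH : Monotone H) (hK : Monotone K) {a z : ℝ} (hHa : H a = 0)
    (hKa : 0 ≤ K a) (haz : a ≤ z) :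
    ∫ u in Ioc a z, (1 - K u) ∂μ - ∫ v in Ioc a z, H v ∂ν = H z * (1 - K z) := by
  have := isLocallyFiniteMeasure_of_cdf hμ
  have hKint : IntegrableOn K (Ioc a z) μ :=
    (hK.locallyIntegrable.integrableOn_isCompact isCompact_Icc).mono_set Ioc_subset_Icc_self
  have hsplit : ∫ u in Ioc a z, (1 - K u) ∂μ
      = ∫ u in Ioc a z, (1 - K z) ∂μ + ∫ u in Ioc a z, (K z - K u) ∂μ := by
    have hconst (c : ℝ) : IntegrableOn (fun _ => c) (Ioc a z) μ :=
      integrableOn_const measure_Ioc_lt_top.ne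
    have hdiff : IntegrableOn (fun u => K z - K u) (Ioc a z) μ := (hconst (K z)).sub hKint
    rw [← integral_add (hconst _) hdiff]
    simp_rw [sub_add_sub_cancel]
  rw [hsplit, setIntegral_Ioc_sub_cdf_eq_setIntegral_Ioc_cdf_sub hμ hν hH hK hHa.ge hKa, hHa,
    setIntegral_const, measureReal_def, measure_Ioc_of_cdf hμ haz hHa.ge, hHa,
    ENNReal.toReal_ofReal (by linarith [hH haz])]
  simp only [sub_zero, smul_eq_mul, add_sub_cancel_right]

end TwoCdfs

lemma eq_withDensity_ofReal_of_measure_Iic {μ ν : Measure ℝ} {f : ℝ → ℝ} (hf : Integrable f μ)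
    (hf0 : 0 ≤ᵐ[μ] f) (h : ∀ b, ν (Iic b) = ENNReal.ofReal (∫ z in Iic b, f z ∂μ)) :
    ν = μ.withDensity fun z => ENNReal.ofReal (f z) := by
  have := isFiniteMeasure_withDensity_ofReal hf.2
  refine (Measure.ext_of_Iic _ _ fun b => ?_).symm
  rw [h, withDensity_apply _ measurableSet_Iic,
    ofReal_integral_eq_lintegral_ofReal hf.integrableOn (ae_restrict_of_ae hf0)]

theorem woodroofe_identity_general
    (FF GG : ℝ → ℝ)
    (hFFmono : Monotone FF) (hFFcont : Continuous FF)
    (hFF0 : ∀ x ≤ (0 : ℝ), FF x = 0) (hFFtop : Tendsto FF atTop (nhds 1))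
    (hGGmono : Monotone GG)
    (hGG0 : ∀ x ≤ (0 : ℝ), GG x = 0)
    (hGGlt : ∀ z : ℝ, GG z < 1)
    (μF μG : Measure ℝ)
    (hμF : ∀ b, μF (Set.Iic b) = ENNReal.ofReal (FF b))
    (hμG : ∀ b, μG (Set.Iic b) = ENNReal.ofReal (GG b))
    (p : ℝ) (hppos : 0 < p)
    (F G : ℝ → ℝ)
    (hF : ∀ x, F x = p⁻¹ * ∫ z in Set.Ioc (0 : ℝ) x, (1 - GG z) ∂μF)
    (hG : ∀ y, G y = p⁻¹ * ∫ z in Set.Ioc (0 : ℝ) y, FF z ∂μG)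
    (μFo : Measure ℝ) (hμFo : ∀ b, μFo (Set.Iic b) = ENNReal.ofReal (F b)) :
    ∀ x > (0 : ℝ), 0 < FF x →
      (∫ z in Set.Ioi x, 1 / FF z ∂μF) = (∫ z in Set.Ioi x, 1 / (F z - G z) ∂μFo) ∧
      FF x = Real.exp (-∫ z in Set.Ioi x, 1 / (F z - G z) ∂μFo) := by
  intro x hx hFFx
  have hFFnn := nonneg_of_monotone_of_eq_zero hFFmono hFF0
  have hGGnn := nonneg_of_monotone_of_eq_zero hGGmono hGG0
  have hGGmeas : Measurable GG := hGGmono.measurable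
  have := isProbabilityMeasure_of_cdf hμF hFFtop
  have := nullSingletonClass_of_cdf hμF hFFcont hFFnn
  have hC (z : ℝ) (hz : 0 ≤ z) : F z - G z = p⁻¹ * (FF z * (1 - GG z)) := by
    rw [hF, hG, ← mul_sub, setIntegral_Ioc_one_sub_cdf_sub_setIntegral_Ioc_cdf hμF hμG hFFmono
      hGGmono (hFF0 0 le_rfl) (hGGnn 0) hz]
  have hdens (z : ℝ) : 0 ≤ p⁻¹ * (1 - GG z) :=
    mul_nonneg (inv_nonneg.2 hppos.le) (sub_nonneg.2 (hGGlt z).le)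
  have hdensity : μFo = μF.withDensity fun z => ENNReal.ofReal (p⁻¹ * (1 - GG z)) := by
    refine eq_withDensity_ofReal_of_measure_Iic ?_ (ae_of_all _ hdens) fun b => ?_
    · refine Integrable.of_bound (by fun_prop) p⁻¹ (ae_of_all _ fun z => ?_)
      rw [norm_of_nonneg (hdens z)]
      nlinarith [hGGnn z, inv_pos.2 hppos]
    -- `μF (Iic 0) = FF 0 = 0`, so the integral over `Ioc 0 b` defining `F b` is one over `Iic b`
    rw [hμFo, hF, ← integral_const_mul, ← Iic_sdiff_Iic,
      setIntegral_congr_set (sdiff_null_ae_eq_self (by simp [hμF, hFF0]))]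
  have key : ∫ z in Ioi x, 1 / (F z - G z) ∂μFo = ∫ z in Ioi x, 1 / FF z ∂μF := by
    rw [hdensity, setIntegral_withDensity_eq_setIntegral_toReal_smul (by fun_prop)
      (ae_of_all _ fun _ => ENNReal.ofReal_lt_top) _ measurableSet_Ioi]
    refine setIntegral_congr_fun measurableSet_Ioi fun z hz => ?_
    have hFFz : 0 < FF z := hFFx.trans_le (hFFmono hz.le)
    have hGGz : 0 < 1 - GG z := sub_pos.2 (hGGlt z)
    rw [ENNReal.toReal_ofReal (hdens z), hC z (hx.trans hz).le, smul_eq_mul]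
    field_simp
  have hlog := setIntegral_Ioi_inv_of_cdf hμF hFFmono hFFcont hFFtop hFFnn hFFx
  simp only [one_div] at key ⊢
  exact ⟨key.symm, by rw [key, hlog, neg_neg, exp_log hFFx]⟩

/-- Woodroofe's identity:
`∫_{(x,∞)} (1/𝐅) dμ_𝐅 = ∫_{(x,∞)} (1/C) dμ_F` for every `x > 0` with `𝐅(x) > 0`,
where `C := F − G`; consequently `𝐅(x) = exp(−∫_{(x,∞)} (1/C) dμ_F)`. -/
theorem woodroofe_identity
    (FF GG : ℝ → ℝ)
    (hFFmono : Monotone FF) (hFFcont : Continuous FF)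
    (hFF0 : ∀ x ≤ (0 : ℝ), FF x = 0) (hFFtop : Tendsto FF atTop (nhds 1))
    (hGGmono : Monotone GG) (hGGcont : Continuous GG)
    (hGG0 : ∀ x ≤ (0 : ℝ), GG x = 0) (hGGtop : Tendsto GG atTop (nhds 1))
    (hFFlt : ∀ z : ℝ, FF z < 1) (hGGlt : ∀ z : ℝ, GG z < 1)
    (μF μG : Measure ℝ)
    (hμF : ∀ b, μF (Set.Iic b) = ENNReal.ofReal (FF b))
    (hμG : ∀ b, μG (Set.Iic b) = ENNReal.ofReal (GG b))
    (p : ℝ) (hp : p = ∫ z in Set.Ioi (0 : ℝ), (1 - GG z) ∂μF) (hppos : 0 < p)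
    (F G : ℝ → ℝ)
    (hF : ∀ x, F x = p⁻¹ * ∫ z in Set.Ioc (0 : ℝ) x, (1 - GG z) ∂μF)
    (hG : ∀ y, G y = p⁻¹ * ∫ z in Set.Ioc (0 : ℝ) y, FF z ∂μG)
    (μFo : Measure ℝ) (hμFo : ∀ b, μFo (Set.Iic b) = ENNReal.ofReal (F b)) :
    ∀ x > (0 : ℝ), 0 < FF x →
      (∫ z in Set.Ioi x, 1 / FF z ∂μF) = (∫ z in Set.Ioi x, 1 / (F z - G z) ∂μFo) ∧
      FF x = Real.exp (-∫ z in Set.Ioi x, 1 / (F z - G z) ∂μFo) :=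
  woodroofe_identity_general FF GG hFFmono hFFcont hFF0 hFFtop hGGmono hGG0 hGGlt μF μG hμF hμG p
    hppos F G hF hG μFo hμFo
end

section
/- Under the truncation model with regularly varying tails 𝐅̄ and 𝐆̄ of indices −1/γ₁ and −1/γ₂, one has lim_{x→∞} ( ∫_{(x,∞)} 𝐆̄(z) dμ_𝐅(z) ) / ( 𝐅̄(x)·𝐆̄(x) ) = γ/γ₁ = γ₂/(γ₁+γ₂), where γ := γ₁γ₂/(γ₁+γ₂); equivalently, p·F̄(x)/(𝐅̄(x)𝐆̄(x)) → γ₂/(γ₁+γ₂) as x → ∞, with F̄ := 1−F. -/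
open MeasureTheory Filter Set Real Topology

/-!
Write `H x = ∫_{(x,∞)} 𝐆̄ dμ_𝐅` and `r x = H x / (𝐅̄ x 𝐆̄ x) ∈ [0, 1]`. Splitting
`(x,∞) = (x,λx] ∪ (λx,∞)` and bounding the antitone `𝐆̄` on `(x,λx]` by its values at the
endpoints gives, with `u = 𝐅̄(λx)/𝐅̄(x)` and `v = 𝐆̄(λx)/𝐆̄(x)`,
`r x ≤ (1 - u) + u v r(λx)` and `1 - r x ≤ (1 - v) + u v (1 - r(λx))`.
By regular variation `u → a = λ^(-1/γ₁)` and `v → b = λ^(-1/γ₂)`, and since `r` is bounded, taking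
the supremum over `[X, ∞)` turns these recursions into the eventual bounds
`r ≲ (1 - a)/(1 - ab)` and `1 - r ≲ (1 - b)/(1 - ab)`. As `λ → 1` these quotients tend to the ratios
of derivatives at `λ = 1`, namely `γ₂/(γ₁+γ₂)` and `γ₁/(γ₁+γ₂)`.
-/

theorem tendsto_sub_div_sub_of_hasDerivAt {f g : ℝ → ℝ} {f' g' x : ℝ} (hf : HasDerivAt f f' x)
    (hg : HasDerivAt g g' x) (hg' : g' ≠ 0) :
    Tendsto (fun y => (f y - f x) / (g y - g x)) (𝓝[≠] x) (𝓝 (f' / g')) := by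
  refine ((hasDerivAt_iff_tendsto_slope.1 hf).div (hasDerivAt_iff_tendsto_slope.1 hg) hg').congr' ?_
  filter_upwards [self_mem_nhdsWithin] with y hy
  rw [Pi.div_apply, slope_def_field, slope_def_field,
    div_div_div_cancel_right₀ (sub_ne_zero.2 hy)]

theorem tendsto_one_sub_rpow_div_one_sub_rpow_mul_rpow {α β : ℝ} (hα : 0 < α) (hβ : 0 < β) :
    Tendsto (fun l : ℝ => (1 - l ^ (-α)) / (1 - l ^ (-α) * l ^ (-β))) (𝓝[>] 1)
      (𝓝 (α / (α + β))) := by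
  have hrpow (p : ℝ) : HasDerivAt (fun l : ℝ => l ^ p) p 1 := by
    simpa using hasDerivAt_rpow_const (x := 1) (p := p) (Or.inl one_ne_zero)
  have hprod : HasDerivAt (fun l : ℝ => l ^ (-α) * l ^ (-β)) (-(α + β)) 1 :=
    ((hrpow (-α)).fun_mul (hrpow (-β))).congr_deriv (by simp only [one_rpow]; ring)
  have h := tendsto_sub_div_sub_of_hasDerivAt (hrpow (-α)) hprod (by linarith)
  simp only [one_rpow, mul_one, neg_div_neg_eq] at h
  refine (h.mono_left (nhdsWithin_mono _ fun l hl => ne_of_gt hl)).congr fun l => ?_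
  rw [← neg_sub 1, ← neg_sub 1, neg_div_neg_eq]

theorem le_div_one_sub_of_le_add_mul_comp {r g : ℝ → ℝ} {X A q x : ℝ} (hq₀ : 0 ≤ q) (hq₁ : q < 1)
    (hr : BddAbove (r '' Ici X)) (hg : ∀ y ≥ X, X ≤ g y) (h : ∀ y ≥ X, r y ≤ A + q * r (g y))
    (hx : X ≤ x) : r x ≤ A / (1 - q) := by
  set s := sSup (r '' Ici X)
  have hle : ∀ y ≥ X, r y ≤ s := fun y hy => le_csSup hr (mem_image_of_mem r hy)
  have hs : s ≤ A + q * s := csSup_le (nonempty_Ici.image r) <| by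
    rintro _ ⟨y, hy, rfl⟩
    exact (h y hy).trans (by gcongr; exact hle _ (hg y hy))
  rw [le_div_iff₀ (sub_pos.2 hq₁)]
  nlinarith [hle x hx]

theorem eventually_lt_of_le_add_mul_comp {r g P Q : ℝ → ℝ} {P₀ Q₀ c : ℝ} (hr₀ : ∀ x, 0 ≤ r x)
    (hr : BddAbove (range r)) (hg : ∀ᶠ x in atTop, x ≤ g x) (hP : Tendsto P atTop (𝓝 P₀))
    (hQ : Tendsto Q atTop (𝓝 Q₀)) (hQ₀ : 0 ≤ Q₀) (hQ₁ : Q₀ < 1) (hc : P₀ / (1 - Q₀) < c)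
    (h : ∀ᶠ x in atTop, r x ≤ P x + Q x * r (g x)) : ∀ᶠ x in atTop, r x < c := by
  have hcont : ContinuousAt (fun δ : ℝ => (P₀ + δ) / (1 - (Q₀ + δ))) 0 :=
    ContinuousAt.div (by fun_prop) (by fun_prop) (by simp only [add_zero]; linarith)
  obtain ⟨δ, ⟨hδc, hδ₁⟩, hδ⟩ : ∃ δ, ((P₀ + δ) / (1 - (Q₀ + δ)) < c ∧ Q₀ + δ < 1) ∧ 0 < δ := by
    refine ((eventually_nhdsWithin_of_eventually_nhds (s := Ioi (0 : ℝ)) (a := 0) ?_).and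
      self_mem_nhdsWithin).exists
    exact (hcont.eventually (gt_mem_nhds (by simpa using hc))).and
      (continuous_const_add Q₀ |>.continuousAt.eventually (gt_mem_nhds (by simpa using hQ₁)))
  obtain ⟨X, hX⟩ := eventually_atTop.1 <| hg.and <| h.and <|
    (hP.eventually_lt_const (lt_add_of_pos_right P₀ hδ)).and
    (hQ.eventually_lt_const (lt_add_of_pos_right Q₀ hδ))
  refine eventually_atTop.2 ⟨X, fun x hx => lt_of_le_of_lt ?_ hδc⟩
  refine le_div_one_sub_of_le_add_mul_comp (by linarith) hδ₁ (hr.mono (image_subset_range _ _))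
    (fun y hy => hy.trans (hX y hy).1) (fun y hy => ?_) hx
  obtain ⟨-, hy, hPy, hQy⟩ := hX y hy
  calc r y ≤ P y + Q y * r (g y) := hy
    _ ≤ P₀ + δ + (Q₀ + δ) * r (g y) := by gcongr; exact hr₀ _

section TailRecursion

variable {r : ℝ → ℝ} {u v : ℝ → ℝ → ℝ} {α β : ℝ}

theorem eventually_lt_of_le_one_sub_add_mul_comp (hα : 0 < α) (hβ : 0 < β)
    (hr₀ : ∀ x, 0 ≤ r x) (hr₁ : ∀ x, r x ≤ 1)
    (hu : ∀ l > 1, Tendsto (u l) atTop (𝓝 (l ^ (-α))))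
    (hv : ∀ l > 1, Tendsto (v l) atTop (𝓝 (l ^ (-β))))
    (h : ∀ l > 1, ∀ᶠ x in atTop, r x ≤ 1 - u l x + u l x * v l x * r (l * x))
    {c : ℝ} (hc : α / (α + β) < c) : ∀ᶠ x in atTop, r x < c := by
  obtain ⟨l, hlc, hl⟩ :=
    (((tendsto_one_sub_rpow_div_one_sub_rpow_mul_rpow hα hβ).eventually_lt_const hc).and
      self_mem_nhdsWithin).exists
  have ha : l ^ (-α) < 1 := rpow_lt_one_of_one_lt_of_neg hl (by linarith)
  have hb : l ^ (-β) < 1 := rpow_lt_one_of_one_lt_of_neg hl (by linarith)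
  have hb₀ : 0 ≤ l ^ (-β) := rpow_nonneg (by linarith) _
  refine eventually_lt_of_le_add_mul_comp hr₀ ⟨1, forall_mem_range.2 hr₁⟩ ?_
    ((hu l hl).const_sub 1) ((hu l hl).mul (hv l hl)) (by positivity)
    (mul_lt_one_of_nonneg_of_lt_one_left (by positivity) ha hb.le) hlc (h l hl)
  filter_upwards [eventually_ge_atTop 0] with x hx
  nlinarith

theorem tendsto_of_le_one_sub_add_mul_comp (hα : 0 < α) (hβ : 0 < β)
    (hr₀ : ∀ x, 0 ≤ r x) (hr₁ : ∀ x, r x ≤ 1)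
    (hu : ∀ l > 1, Tendsto (u l) atTop (𝓝 (l ^ (-α))))
    (hv : ∀ l > 1, Tendsto (v l) atTop (𝓝 (l ^ (-β))))
    (hupper : ∀ l > 1, ∀ᶠ x in atTop, r x ≤ 1 - u l x + u l x * v l x * r (l * x))
    (hlower : ∀ l > 1, ∀ᶠ x in atTop, 1 - r x ≤ 1 - v l x + v l x * u l x * (1 - r (l * x))) :
    Tendsto r atTop (𝓝 (α / (α + β))) := by
  -- The lower bound is the upper bound for `1 - r`, with the roles of `u` and `v` exchanged.
  refine tendsto_order.2 ⟨fun c hc => ?_, fun c hc =>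
    eventually_lt_of_le_one_sub_add_mul_comp hα hβ hr₀ hr₁ hu hv hupper hc⟩
  have hc' : β / (β + α) < 1 - c := by
    have : β / (β + α) = 1 - α / (α + β) := by field_simp; ring
    linarith
  filter_upwards [eventually_lt_of_le_one_sub_add_mul_comp (r := fun x => 1 - r x) hβ hα
    (fun x => sub_nonneg.2 (hr₁ x)) (fun x => by linarith [hr₀ x]) hv hu hlower hc'] with x hx
  linarith

end TailRecursion

theorem setIntegral_le_of_le_const_real {X : Type*} [MeasurableSpace X] {μ : Measure X}
    {s : Set X} {f : X → ℝ} {c : ℝ} (hs : MeasurableSet s) (hμs : μ s ≠ ⊤)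
    (hf : ∀ x ∈ s, f x ≤ c) (hfint : IntegrableOn f s μ) :
    ∫ x in s, f x ∂μ ≤ c * μ.real s := by
  simpa [mul_comm] using setIntegral_mono_on hfint (integrableOn_const hμs) hs hf

section Measure

variable {μ : Measure ℝ} {Φ : ℝ → ℝ}

theorem isProbabilityMeasure_of_measure_Iic (hμ : ∀ b, μ (Iic b) = ENNReal.ofReal (Φ b))
    (hΦ : Tendsto Φ atTop (𝓝 1)) : IsProbabilityMeasure μ := by
  refine ⟨tendsto_nhds_unique (tendsto_measure_Iic_atTop μ) ?_⟩
  simpa only [hμ, ENNReal.ofReal_one] using ENNReal.tendsto_ofReal hΦ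

variable [IsProbabilityMeasure μ]

theorem measureReal_Ioi_eq_one_sub (hμ : ∀ b, μ (Iic b) = ENNReal.ofReal (Φ b)) {x : ℝ}
    (hx : 0 ≤ Φ x) : μ.real (Ioi x) = 1 - Φ x := by
  rw [← compl_Iic, probReal_compl_eq_one_sub measurableSet_Iic, measureReal_def, hμ,
    ENNReal.toReal_ofReal hx]

theorem measureReal_Ioc_eq_sub (hμ : ∀ b, μ (Iic b) = ENNReal.ofReal (Φ b)) (hΦ : Monotone Φ)
    {x y : ℝ} (hx : 0 ≤ Φ x) (hxy : x ≤ y) : μ.real (Ioc x y) = Φ y - Φ x := by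
  rw [← Ioi_sdiff_Ioi, measureReal_sdiff (Ioi_subset_Ioi hxy) measurableSet_Ioi,
    measureReal_Ioi_eq_one_sub hμ hx, measureReal_Ioi_eq_one_sub hμ (hx.trans (hΦ hxy))]
  ring

end Measure

section AntitoneIntegrand

variable {μ : Measure ℝ} [IsFiniteMeasure μ] {g : ℝ → ℝ}

theorem integrableOn_Ioi_of_antitone (hg : Antitone g) (hg₀ : ∀ z, 0 ≤ g z) (x : ℝ) :
    IntegrableOn g (Ioi x) μ :=
  .of_bound (measure_lt_top _ _) hg.measurable.aestronglyMeasurable (g x) <|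
    (ae_restrict_iff' measurableSet_Ioi).2 <| .of_forall fun z hz => by
      rw [Real.norm_of_nonneg (hg₀ z)]
      exact hg (le_of_lt hz)

theorem setIntegral_Ioi_eq_add (hg : Antitone g) (hg₀ : ∀ z, 0 ≤ g z) {x y : ℝ} (hxy : x ≤ y) :
    ∫ z in Ioi x, g z ∂μ = ∫ z in Ioc x y, g z ∂μ + ∫ z in Ioi y, g z ∂μ := by
  rw [← Ioc_union_Ioi_eq_Ioi hxy]
  exact setIntegral_union (Ioc_disjoint_Ioi le_rfl) measurableSet_Ioi
    ((integrableOn_Ioi_of_antitone hg hg₀ x).mono_set Ioc_subset_Ioi_self)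
    (integrableOn_Ioi_of_antitone hg hg₀ y)

theorem setIntegral_Ioi_le (hg : Antitone g) (hg₀ : ∀ z, 0 ≤ g z) (x : ℝ) :
    ∫ z in Ioi x, g z ∂μ ≤ g x * μ.real (Ioi x) :=
  setIntegral_le_of_le_const_real measurableSet_Ioi (measure_ne_top _ _)
    (fun _ hz => hg (le_of_lt hz)) (integrableOn_Ioi_of_antitone hg hg₀ x)

theorem setIntegral_Ioi_le_add (hg : Antitone g) (hg₀ : ∀ z, 0 ≤ g z) {x y : ℝ} (hxy : x ≤ y) :
    ∫ z in Ioi x, g z ∂μ ≤ g x * μ.real (Ioc x y) + ∫ z in Ioi y, g z ∂μ := by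
  rw [setIntegral_Ioi_eq_add hg hg₀ hxy]
  gcongr
  exact setIntegral_le_of_le_const_real measurableSet_Ioc (measure_ne_top _ _)
    (fun _ hz => hg hz.1.le) ((integrableOn_Ioi_of_antitone hg hg₀ x).mono_set Ioc_subset_Ioi_self)

theorem add_le_setIntegral_Ioi (hg : Antitone g) (hg₀ : ∀ z, 0 ≤ g z) {x y : ℝ} (hxy : x ≤ y) :
    g y * μ.real (Ioc x y) + ∫ z in Ioi y, g z ∂μ ≤ ∫ z in Ioi x, g z ∂μ := by
  rw [setIntegral_Ioi_eq_add hg hg₀ hxy]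
  gcongr
  exact setIntegral_ge_of_const_le_real measurableSet_Ioc (measure_ne_top _ _)
    (fun _ hz => hg hz.2) ((integrableOn_Ioi_of_antitone hg hg₀ x).mono_set Ioc_subset_Ioi_self)

end AntitoneIntegrand

noncomputable def tailRatio (μ : Measure ℝ) (Φ g : ℝ → ℝ) (x : ℝ) : ℝ :=
  (∫ z in Ioi x, g z ∂μ) / ((1 - Φ x) * g x)

section TailRatio

variable {μ : Measure ℝ} {Φ g : ℝ → ℝ}

theorem tailRatio_nonneg (hΦ₁ : ∀ x, Φ x < 1) (hg₀ : ∀ z, 0 < g z) (x : ℝ) :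
    0 ≤ tailRatio μ Φ g x :=
  div_nonneg (setIntegral_nonneg measurableSet_Ioi fun z _ => (hg₀ z).le)
    (mul_pos (sub_pos.2 (hΦ₁ x)) (hg₀ x)).le

variable [IsProbabilityMeasure μ]

theorem tailRatio_le_one (hμ : ∀ b, μ (Iic b) = ENNReal.ofReal (Φ b)) (hΦ₀ : ∀ x, 0 ≤ Φ x)
    (hΦ₁ : ∀ x, Φ x < 1) (hg : Antitone g) (hg₀ : ∀ z, 0 < g z) (x : ℝ) :
    tailRatio μ Φ g x ≤ 1 := by
  refine div_le_one_of_le₀ ?_ (mul_pos (sub_pos.2 (hΦ₁ x)) (hg₀ x)).le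
  calc ∫ z in Ioi x, g z ∂μ ≤ g x * μ.real (Ioi x) := setIntegral_Ioi_le hg (fun z => (hg₀ z).le) x
    _ = (1 - Φ x) * g x := by rw [measureReal_Ioi_eq_one_sub hμ (hΦ₀ x), mul_comm]

theorem tailRatio_le_one_sub_add (hμ : ∀ b, μ (Iic b) = ENNReal.ofReal (Φ b)) (hΦ : Monotone Φ)
    (hΦ₀ : ∀ x, 0 ≤ Φ x) (hΦ₁ : ∀ x, Φ x < 1) (hg : Antitone g) (hg₀ : ∀ z, 0 < g z)
    {x y : ℝ} (hxy : x ≤ y) :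
    tailRatio μ Φ g x ≤ 1 - (1 - Φ y) / (1 - Φ x) +
      (1 - Φ y) / (1 - Φ x) * (g y / g x) * tailRatio μ Φ g y := by
  have hx := sub_pos.2 (hΦ₁ x)
  have hy := sub_pos.2 (hΦ₁ y)
  have hgx := hg₀ x
  have hgy := hg₀ y
  have h := setIntegral_Ioi_le_add (μ := μ) hg (fun z => (hg₀ z).le) hxy
  rw [measureReal_Ioc_eq_sub hμ hΦ (hΦ₀ x) hxy] at h
  unfold tailRatio
  rw [div_le_iff₀ (by positivity)]
  field_simp
  linarith

theorem one_sub_tailRatio_le_one_sub_add (hμ : ∀ b, μ (Iic b) = ENNReal.ofReal (Φ b))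
    (hΦ : Monotone Φ) (hΦ₀ : ∀ x, 0 ≤ Φ x) (hΦ₁ : ∀ x, Φ x < 1) (hg : Antitone g)
    (hg₀ : ∀ z, 0 < g z) {x y : ℝ} (hxy : x ≤ y) :
    1 - tailRatio μ Φ g x ≤ 1 - g y / g x +
      g y / g x * ((1 - Φ y) / (1 - Φ x)) * (1 - tailRatio μ Φ g y) := by
  have hx := sub_pos.2 (hΦ₁ x)
  have hy := sub_pos.2 (hΦ₁ y)
  have hgx := hg₀ x
  have hgy := hg₀ y
  have h := add_le_setIntegral_Ioi (μ := μ) hg (fun z => (hg₀ z).le) hxy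
  rw [measureReal_Ioc_eq_sub hμ hΦ (hΦ₀ x) hxy] at h
  unfold tailRatio
  field_simp
  linarith

theorem tendsto_tailRatio (hμ : ∀ b, μ (Iic b) = ENNReal.ofReal (Φ b)) (hΦ : Monotone Φ)
    (hΦ₀ : ∀ x, 0 ≤ Φ x) (hΦ₁ : ∀ x, Φ x < 1) (hg : Antitone g) (hg₀ : ∀ z, 0 < g z)
    {α β : ℝ} (hα : 0 < α) (hβ : 0 < β)
    (hΦα : ∀ l > 1, Tendsto (fun x => (1 - Φ (l * x)) / (1 - Φ x)) atTop (𝓝 (l ^ (-α))))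
    (hgβ : ∀ l > 1, Tendsto (fun x => g (l * x) / g x) atTop (𝓝 (l ^ (-β)))) :
    Tendsto (tailRatio μ Φ g) atTop (𝓝 (α / (α + β))) := by
  have hmono : ∀ l > (1 : ℝ), ∀ᶠ x in atTop, x ≤ l * x := fun l hl =>
    eventually_atTop.2 ⟨0, fun x hx => by nlinarith⟩
  refine tendsto_of_le_one_sub_add_mul_comp hα hβ (tailRatio_nonneg hΦ₁ hg₀)
    (tailRatio_le_one hμ hΦ₀ hΦ₁ hg hg₀) hΦα hgβ (fun l hl => ?_) (fun l hl => ?_)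
  · exact (hmono l hl).mono fun x hx => tailRatio_le_one_sub_add hμ hΦ hΦ₀ hΦ₁ hg hg₀ hx
  · exact (hmono l hl).mono fun x hx =>
      one_sub_tailRatio_le_one_sub_add hμ hΦ hΦ₀ hΦ₁ hg hg₀ hx

end TailRatio

theorem tail_integral_ratio_limit_general
    (FF GG : ℝ → ℝ) (γ₁ γ₂ : ℝ) (hγ₁ : 0 < γ₁) (hγ₂ : 0 < γ₂)
    (hFFmono : Monotone FF)
    (hFF0 : ∀ x ≤ (0 : ℝ), FF x = 0) (hFFtop : Tendsto FF atTop (nhds 1))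
    (hGGmono : Monotone GG)
    (hFFlt : ∀ z : ℝ, FF z < 1) (hGGlt : ∀ z : ℝ, GG z < 1)
    (hRVF : ∀ x > (0 : ℝ),
      Tendsto (fun z => (1 - FF (x * z)) / (1 - FF z)) atTop (nhds (x ^ (-(1 / γ₁)))))
    (hRVG : ∀ x > (0 : ℝ),
      Tendsto (fun z => (1 - GG (x * z)) / (1 - GG z)) atTop (nhds (x ^ (-(1 / γ₂)))))
    (μF : Measure ℝ) (hμF : ∀ b, μF (Set.Iic b) = ENNReal.ofReal (FF b))
    (p : ℝ) (hp : p = ∫ z in Set.Ioi (0 : ℝ), (1 - GG z) ∂μF) (hppos : 0 < p)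
    (F : ℝ → ℝ)
    (hF : ∀ x, F x = p⁻¹ * ∫ z in Set.Ioc (0 : ℝ) x, (1 - GG z) ∂μF)
    (γ : ℝ) (hγ : γ = γ₁ * γ₂ / (γ₁ + γ₂)) :
    Tendsto (fun x => (∫ z in Set.Ioi x, (1 - GG z) ∂μF) / ((1 - FF x) * (1 - GG x)))
      atTop (nhds (γ / γ₁)) ∧
    γ / γ₁ = γ₂ / (γ₁ + γ₂) ∧
    Tendsto (fun x => p * (1 - F x) / ((1 - FF x) * (1 - GG x)))
      atTop (nhds (γ₂ / (γ₁ + γ₂))) := by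
  have := isProbabilityMeasure_of_measure_Iic hμF hFFtop
  have hFF₀ (x : ℝ) : 0 ≤ FF x :=
    (hFF0 _ (min_le_right x 0)).symm.le.trans (hFFmono (min_le_left x 0))
  have hG : Antitone fun z => 1 - GG z := fun a b h => sub_le_sub_left (hGGmono h) 1
  have hG₀ (z : ℝ) : 0 < 1 - GG z := sub_pos.2 (hGGlt z)
  have hγ' : γ / γ₁ = γ₂ / (γ₁ + γ₂) := by rw [hγ]; field_simp
  have hlim : Tendsto (tailRatio μF FF fun z => 1 - GG z) atTop (𝓝 (γ₂ / (γ₁ + γ₂))) := by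
    have h := tendsto_tailRatio hμF hFFmono hFF₀ hFFlt hG hG₀ (one_div_pos.2 hγ₁)
      (one_div_pos.2 hγ₂) (fun l hl => hRVF l (one_pos.trans hl))
      (fun l hl => hRVG l (one_pos.trans hl))
    rwa [show 1 / γ₁ / (1 / γ₁ + 1 / γ₂) = γ₂ / (γ₁ + γ₂) by field_simp; ring] at h
  refine ⟨hγ' ▸ hlim, hγ', hlim.congr' ?_⟩
  filter_upwards [eventually_ge_atTop 0] with x hx
  rw [hF, mul_sub, mul_one, ← mul_assoc, mul_inv_cancel₀ hppos.ne', one_mul, hp,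
    setIntegral_Ioi_eq_add hG (fun z => (hG₀ z).le) hx, add_sub_cancel_left, tailRatio]

/-- Under the truncation model with regularly varying tails `𝐅̄`, `𝐆̄` of
indices `−1/γ₁`, `−1/γ₂`, one has
`(∫_{(x,∞)} 𝐆̄ dμ_𝐅)/(𝐅̄(x)·𝐆̄(x)) → γ/γ₁ = γ₂/(γ₁+γ₂)` as `x → ∞`, where
`γ := γ₁γ₂/(γ₁+γ₂)`; equivalently `p·F̄(x)/(𝐅̄(x)𝐆̄(x)) → γ₂/(γ₁+γ₂)`. -/
theorem tail_integral_ratio_limit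
    (FF GG : ℝ → ℝ) (γ₁ γ₂ : ℝ) (hγ₁ : 0 < γ₁) (hγ₂ : 0 < γ₂)
    (hFFmono : Monotone FF) (hFFcont : Continuous FF)
    (hFF0 : ∀ x ≤ (0 : ℝ), FF x = 0) (hFFtop : Tendsto FF atTop (nhds 1))
    (hGGmono : Monotone GG) (hGGcont : Continuous GG)
    (hGG0 : ∀ x ≤ (0 : ℝ), GG x = 0) (hGGtop : Tendsto GG atTop (nhds 1))
    (hFFlt : ∀ z : ℝ, FF z < 1) (hGGlt : ∀ z : ℝ, GG z < 1)
    (hRVF : ∀ x > (0 : ℝ),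
      Tendsto (fun z => (1 - FF (x * z)) / (1 - FF z)) atTop (nhds (x ^ (-(1 / γ₁)))))
    (hRVG : ∀ x > (0 : ℝ),
      Tendsto (fun z => (1 - GG (x * z)) / (1 - GG z)) atTop (nhds (x ^ (-(1 / γ₂)))))
    (μF : Measure ℝ) (hμF : ∀ b, μF (Set.Iic b) = ENNReal.ofReal (FF b))
    (p : ℝ) (hp : p = ∫ z in Set.Ioi (0 : ℝ), (1 - GG z) ∂μF) (hppos : 0 < p)
    (F : ℝ → ℝ)
    (hF : ∀ x, F x = p⁻¹ * ∫ z in Set.Ioc (0 : ℝ) x, (1 - GG z) ∂μF)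
    (γ : ℝ) (hγ : γ = γ₁ * γ₂ / (γ₁ + γ₂)) :
    Tendsto (fun x => (∫ z in Set.Ioi x, (1 - GG z) ∂μF) / ((1 - FF x) * (1 - GG x)))
      atTop (nhds (γ / γ₁)) ∧
    γ / γ₁ = γ₂ / (γ₁ + γ₂) ∧
    Tendsto (fun x => p * (1 - F x) / ((1 - FF x) * (1 - GG x)))
      atTop (nhds (γ₂ / (γ₁ + γ₂))) :=
  tail_integral_ratio_limit_general FF GG γ₁ γ₂ hγ₁ hγ₂ hFFmono hFF0 hFFtop hGGmono hFFlt hGGlt hRVF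
    hRVG μF hμF p hp hppos F hF γ hγ
end
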